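/- Let n ≥ r ≥ 2, 0 < η ≤ (r+1)^{-1}, C > 0, 1 < p ≤ ∞ with conjugate exponent q. Let H be an η-nonatomic hypergraph system, e an edge with |e| = r, and f ≥ 0 integrable and measurable with respect to coordinates in e. If (∫_A f dμ)^q ≤ C^q(μ(A)+(r+3)η) holds for every A ∈ S_{∂e}, then f is (K,η,p)-regular with K = C(r+4)^{1/q} η^{−1/p} (interpreting η^{−1/p} = 1 when p = ∞); in particular, if p = ∞ then f is (C(r+4), η, ∞)-regular. -/

import Mathlib

open MeasureTheory ENNReal

/-- `A ⊆ ∏ i, X i` depends only on the coordinates in `e`. -/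
def DependsOnCoords {n : ℕ} {X : Fin n → Type*} (e : Finset (Fin n)) (A : Set (∀ i, X i)) : Prop :=
  ∀ x y : ∀ i, X i, (∀ i ∈ e, x i = y i) → (x ∈ A ↔ y ∈ A)

/-- A function on `∏ i, X i` depending only on the coordinates in `e`. -/
def DependsOnF {n : ℕ} {X : Fin n → Type*} (e : Finset (Fin n)) (f : (∀ i, X i) → ℝ) : Prop :=
  ∀ x y : ∀ i, X i, (∀ i ∈ e, x i = y i) → f x = f y

/-- `A` belongs to `B_e`: it is measurable and depends only on the coordinates in `e`. -/
def CubeSet {n : ℕ} {X : Fin n → Type*} [∀ i, MeasurableSpace (X i)]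
    (e : Finset (Fin n)) (A : Set (∀ i, X i)) : Prop :=
  MeasurableSet A ∧ DependsOnCoords e A

/-- The boundary `∂e` of `e`: subsets of `e` of size `|e| - 1`. -/
def bdry {n : ℕ} (e : Finset (Fin n)) : Finset (Finset (Fin n)) :=
  e.powerset.filter (fun e' => e'.card + 1 = e.card)

/-- `A ∈ S_{∂e}`: `A` is an intersection `⋂_{e' ∈ ∂e} A_{e'}` with `A_{e'} ∈ B_{e'}`. -/
def SPartial {n : ℕ} {X : Fin n → Type*} [∀ i, MeasurableSpace (X i)]
    (e : Finset (Fin n)) (A : Set (∀ i, X i)) : Prop :=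
  ∃ F : Finset (Fin n) → Set (∀ i, X i),
    (∀ e' ∈ bdry e, CubeSet e' (F e')) ∧ A = ⋂ e' ∈ bdry e, F e'

/-- Every atom of `ν` has measure at most `η`. -/
def AtomsLE {Y : Type*} [MeasurableSpace Y] (ν : Measure Y) (η : ℝ) : Prop :=
  ∀ A : Set Y, MeasurableSet A → 0 < ν A →
    (∀ B : Set Y, B ⊆ A → MeasurableSet B → ν B = 0 ∨ ν B = ν A) →
    (ν A).toReal ≤ η

/-- The conditional expectation of `f` with respect to the σ-algebra generated by the
finite partition `P` (explicit formula: average of `f` on each cell). -/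
noncomputable def partCE {Y : Type*} [MeasurableSpace Y] (ν : Measure Y)
    (P : Finset (Set Y)) (f : Y → ℝ) : Y → ℝ :=
  fun x => ∑ s ∈ P, Set.indicator s (fun _ => (∫ y in s, f y ∂ν) / (ν s).toReal) x

/-- `f` is `(C, η, p)`-regular: for every partition `P ⊆ S_{∂e}` of the whole space with
all cells of measure at least `η`, `‖E(f | σ(P))‖_{L_p} ≤ C`. -/
def LpRegular {n : ℕ} {X : Fin n → Type*} [∀ i, MeasurableSpace (X i)]
    (μ : Measure (∀ i, X i)) (e : Finset (Fin n)) (C η : ℝ) (p : ℝ≥0∞)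
    (f : (∀ i, X i) → ℝ) : Prop :=
  ∀ P : Finset (Set (∀ i, X i)), (∀ s ∈ P, SPartial e s) →
    (P : Set (Set (∀ i, X i))).PairwiseDisjoint id →
    ⋃₀ (P : Set (Set (∀ i, X i))) = Set.univ →
    (∀ s ∈ P, η ≤ (μ s).toReal) →
    eLpNorm (partCE μ P f) p μ ≤ ENNReal.ofReal C

/-!
On a cell `s` of the partition, `E(f | σ(P))` is the average `(∫_s f) / μ(s)`. Since `μ(s) ≥ η`,
the hypothesis gives `(∫_s f)^q ≤ C^q (r + 4) μ(s)`, so this average is at most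
`C (r + 4)^{1/q} μ(s)^{1/q - 1} ≤ C (r + 4)^{1/q} η^{-1/p}`, as `1/q - 1 = -1/p ≤ 0`.
A pointwise bound bounds every `L^p` norm on a probability space.
-/

lemma one_le_of_holderConjugate_ofReal (p : ℝ≥0∞) (q : ℝ)
    [HolderConjugate p (ENNReal.ofReal q)] : 1 ≤ q :=
  ENNReal.one_le_ofReal.mp (HolderConjugate.one_le _ p)

lemma toReal_inv_add_inv_of_holderConjugate_ofReal (p : ℝ≥0∞) (q : ℝ)
    [HolderConjugate p (ENNReal.ofReal q)] : p.toReal⁻¹ + q⁻¹ = 1 := by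
  have hq : 0 ≤ q := zero_le_one.trans (one_le_of_holderConjugate_ofReal p q)
  have h := congrArg ENNReal.toReal (HolderConjugate.inv_add_inv_eq_one p (ENNReal.ofReal q))
  rwa [ENNReal.toReal_add (by simpa using HolderConjugate.ne_zero p (ENNReal.ofReal q))
      (by simpa using HolderConjugate.ne_zero (ENNReal.ofReal q) p), ENNReal.toReal_inv,
    ENNReal.toReal_inv, ENNReal.toReal_ofReal hq, ENNReal.toReal_one] at h

lemma le_mul_rpow_inv_of_rpow_le_mul {a b C q : ℝ} (ha : 0 ≤ a) (hb : 0 ≤ b) (hC : 0 ≤ C)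
    (hq : 0 < q) (h : a ^ q ≤ C ^ q * b) : a ≤ C * b ^ q⁻¹ := by
  rwa [← Real.le_rpow_inv_iff_of_pos ha (by positivity) hq, Real.mul_rpow (by positivity) hb,
    Real.rpow_rpow_inv hC hq.ne'] at h

lemma div_le_of_rpow_le_mul_add {a m η C c q : ℝ} (ha : 0 ≤ a) (hC : 0 ≤ C) (hc : 0 ≤ c)
    (hη : 0 < η) (hηm : η ≤ m) (hq : 1 ≤ q) (h : a ^ q ≤ C ^ q * (m + c * η)) :
    a / m ≤ C * (c + 1) ^ q⁻¹ * η ^ (q⁻¹ - 1) := by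
  have hm : 0 < m := hη.trans_le hηm
  have hq0 : 0 < q := one_pos.trans_le hq
  have hbound : a ≤ C * ((c + 1) * m) ^ q⁻¹ := by
    refine le_mul_rpow_inv_of_rpow_le_mul ha (by positivity) hC hq0 (h.trans ?_)
    gcongr
    nlinarith
  calc a / m ≤ C * ((c + 1) * m) ^ q⁻¹ / m := by gcongr
    _ = C * (c + 1) ^ q⁻¹ * m ^ (q⁻¹ - 1) := by
      rw [Real.mul_rpow (by positivity) hm.le, Real.rpow_sub_one hm.ne']
      ring
    _ ≤ C * (c + 1) ^ q⁻¹ * η ^ (q⁻¹ - 1) := mul_le_mul_of_nonneg_left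
      (Real.rpow_le_rpow_of_nonpos hη hηm (sub_nonpos.mpr (inv_le_one_of_one_le₀ hq)))
      (by positivity)

section partCE

variable {Y : Type*} [MeasurableSpace Y] (ν : Measure Y) {P : Finset (Set Y)} (f : Y → ℝ)

lemma partCE_apply_of_mem (hP : (P : Set (Set Y)).PairwiseDisjoint id) {s : Set Y} (hs : s ∈ P)
    {x : Y} (hx : x ∈ s) : partCE ν P f x = (∫ y in s, f y ∂ν) / (ν s).toReal := by
  refine (Finset.sum_eq_single_of_mem s hs fun t ht hts => ?_).trans (Set.indicator_of_mem hx _)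
  exact Set.indicator_of_notMem (fun hxt => Set.disjoint_left.mp (hP ht hs hts) hxt hx) _

lemma eLpNorm_partCE_le [IsProbabilityMeasure ν] (hP : (P : Set (Set Y)).PairwiseDisjoint id)
    (hcover : ⋃₀ (P : Set (Set Y)) = Set.univ) {K : ℝ}
    (hK : ∀ s ∈ P, ‖(∫ y in s, f y ∂ν) / (ν s).toReal‖ ≤ K) (p : ℝ≥0∞) :
    eLpNorm (partCE ν P f) p ν ≤ ENNReal.ofReal K := by
  have hbound : ∀ x, ‖partCE ν P f x‖ ≤ K := fun x => by
    obtain ⟨s, hs, hxs⟩ := Set.sUnion_eq_univ_iff.mp hcover x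
    rw [partCE_apply_of_mem ν f hP hs hxs]
    exact hK s hs
  simpa using eLpNorm_le_of_ae_bound (μ := ν) (p := p) (ae_of_all _ hbound)

end partCE

theorem stmt6_general {n r : ℕ}
    {X : Fin n → Type*} [∀ i, MeasurableSpace (X i)]
    (μ : ∀ i, Measure (X i)) [∀ i, IsProbabilityMeasure (μ i)]
    (η : ℝ) (hη0 : 0 < η)
    (C : ℝ) (hC : 0 < C) (p : ℝ≥0∞)
    (q : ℝ) (hpq : 1 / p + 1 / ENNReal.ofReal q = 1)
    (e : Finset (Fin n))
    (f : (∀ i, X i) → ℝ) (hf0 : 0 ≤ f)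
    (hHolder : ∀ A : Set (∀ i, X i), SPartial e A →
      (∫ x in A, f x ∂(Measure.pi μ)) ^ q
        ≤ C ^ q * (((Measure.pi μ) A).toReal + (r + 3) * η)) :
    LpRegular (Measure.pi μ) e (C * ((r : ℝ) + 4) ^ (1 / q) * η ^ (-(1 / p.toReal))) η p f
      ∧ (p = ∞ → LpRegular (Measure.pi μ) e (C * ((r : ℝ) + 4)) η ∞ f) := by
  have : HolderConjugate p (ENNReal.ofReal q) :=
    ENNReal.holderConjugate_iff.mpr (by simpa using hpq)
  have hq : 1 ≤ q := one_le_of_holderConjugate_ofReal p q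
  have hexp : -(1 / p.toReal) = q⁻¹ - 1 := by
    linarith [toReal_inv_add_inv_of_holderConjugate_ofReal p q, one_div p.toReal]
  have hregular : LpRegular (Measure.pi μ) e
      (C * ((r : ℝ) + 4) ^ (1 / q) * η ^ (-(1 / p.toReal))) η p f := by
    intro P hPS hP hcover hPη
    refine eLpNorm_partCE_le _ f hP hcover (fun s hs => ?_) p
    rw [Real.norm_of_nonneg (div_nonneg (integral_nonneg hf0) ENNReal.toReal_nonneg), hexp,
      one_div, show (r : ℝ) + 4 = r + 3 + 1 by ring]
    exact div_le_of_rpow_le_mul_add (integral_nonneg hf0) hC.le (by positivity) hη0 (hPη s hs) hq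
      (hHolder s (hPS s hs))
  refine ⟨hregular, fun hp_top => ?_⟩
  have hq_one : q = 1 := ENNReal.ofReal_eq_one.mp
    ((HolderConjugate.eq_top_iff_eq_one p (ENNReal.ofReal q)).mp hp_top)
  simpa [hp_top, hq_one] using hregular

/-- **Proposition 4.1(b).** If `(∫_A f dμ)^q ≤ C^q (μ(A) + (r+3)η)` for every
`A ∈ S_{∂e}`, then `f` is `(K, η, p)`-regular with `K = C (r+4)^{1/q} η^{-1/p}`
(with `η^{-1/p} = 1` when `p = ∞`); in particular if `p = ∞` then `f` is
`(C(r+4), η, ∞)`-regular. -/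
theorem stmt6 {n r : ℕ} (hnr : r ≤ n) (hr : 2 ≤ r)
    {X : Fin n → Type*} [∀ i, MeasurableSpace (X i)]
    (μ : ∀ i, Measure (X i)) [∀ i, IsProbabilityMeasure (μ i)]
    (η : ℝ) (hη0 : 0 < η) (hη1 : η ≤ 1 / (r + 1))
    (C : ℝ) (hC : 0 < C) (p : ℝ≥0∞) (hp : 1 < p)
    (q : ℝ) (hq : 1 ≤ q) (hpq : 1 / p + 1 / ENNReal.ofReal q = 1)
    (hnonatomic : ∀ i, AtomsLE (μ i) η)
    (𝓗 : Finset (Finset (Fin n))) (e : Finset (Fin n)) (he : e ∈ 𝓗) (hecard : e.card = r)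
    (f : (∀ i, X i) → ℝ) (hf0 : 0 ≤ f) (hfmeas : Measurable f) (hfdep : DependsOnF e f)
    (hfint : Integrable f (Measure.pi μ))
    (hHolder : ∀ A : Set (∀ i, X i), SPartial e A →
      (∫ x in A, f x ∂(Measure.pi μ)) ^ q
        ≤ C ^ q * (((Measure.pi μ) A).toReal + (r + 3) * η)) :
    LpRegular (Measure.pi μ) e (C * ((r : ℝ) + 4) ^ (1 / q) * η ^ (-(1 / p.toReal))) η p f
      ∧ (p = ∞ → LpRegular (Measure.pi μ) e (C * ((r : ℝ) + 4)) η ∞ f) :=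
  stmt6_general μ η hη0 C hC p q hpq e f hf0 hHolder
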